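/- Let Q : ℕ³ → ℕ be a total computable function such that μ(Q(n,k,s)) = n for all n, k, s, and let r > 1. Then there exists a computable coloring c : ℕ → ZMod r such that for every positive integer w and every n < λ(w), c(w + Q(n, λ(w), μ(w))) = c(w) + 1 in ZMod r. -/

import Mathlib

/-- `mu x = ⌊log₂ x⌋`, the exponent of the highest power of 2 in the binary expansion of `x`. -/
def mu (x : ℕ) : ℕ := Nat.log 2 x

/-- `lam x` is the 2-adic valuation of `x`, the exponent of the lowest power of 2
in the binary expansion of `x`. -/
def lam (x : ℕ) : ℕ := padicValNat 2 x

/-- `Bset n = B^n = {x ∈ ℤ⁺ : μ(x) = n}`. -/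
def Bset (n : ℕ) : Set ℕ := {x | 0 < x ∧ mu x = n}

/-- A set `A ⊆ ℤ⁺` has weak apartness if every `A ∩ B^m` has at most one element and
for every `l` there are at most two elements `x ∈ A` with `λ(x) = l`. -/
def WeakApart (A : Set ℕ) : Prop :=
  (∀ m, (A ∩ Bset m).Subsingleton) ∧
  (∀ l, ∀ x ∈ A, ∀ y ∈ A, ∀ z ∈ A,
    lam x = l → lam y = l → lam z = l → x = y ∨ x = z ∨ y = z)

/-- `FS A`: all finite sums of distinct elements of `A`. -/
def FS (A : Set ℕ) : Set ℕ :=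
  {n | ∃ F : Finset ℕ, ↑F ⊆ A ∧ F.Nonempty ∧ F.sum id = n}

/-- `FSle k A = FS^{≤k}(A)`: sums of at most `k` distinct elements of `A`. -/
def FSle (k : ℕ) (A : Set ℕ) : Set ℕ :=
  {n | ∃ F : Finset ℕ, ↑F ⊆ A ∧ F.Nonempty ∧ F.card ≤ k ∧ F.sum id = n}

/-- `A` is `Π⁰₃`: `x ∈ A ↔ ∀ y ∃ z ∀ w, R x y z w` for a computable relation `R`. -/
def Pi03 (A : Set ℕ) : Prop :=
  ∃ R : ℕ → ℕ → ℕ → ℕ → Bool,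
    Computable (fun p : ℕ × ℕ × ℕ × ℕ => R p.1 p.2.1 p.2.2.1 p.2.2.2) ∧
    ∀ x, x ∈ A ↔ ∀ y, ∃ z, ∀ w, R x y z w = true

/-- `A` is `Σ⁰₃`: `x ∈ A ↔ ∃ y ∀ z ∃ w, R x y z w` for a computable relation `R`. -/
def Sigma03 (A : Set ℕ) : Prop :=
  ∃ R : ℕ → ℕ → ℕ → ℕ → Bool,
    Computable (fun p : ℕ × ℕ × ℕ × ℕ => R p.1 p.2.1 p.2.2.1 p.2.2.2) ∧
    ∀ x, x ∈ A ↔ ∃ y, ∀ z, ∃ w, R x y z w = true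

/-- `A` is `Δ⁰₃` iff it is both `Σ⁰₃` and `Π⁰₃`. -/
def Delta03 (A : Set ℕ) : Prop := Sigma03 A ∧ Pi03 A

/-!
Fix `s = μ(w)`. An edge `w ↦ w + Q(n, λ(w), s)` appends binary digits below the lowest digit of
`w`, and the block appended after a prefix whose last digit is `k` and whose next digit is `n` is
forced to be `Q(n, k, s)`. The colour of `w` is obtained by reading its digits from the top while
keeping a pending block: a block that is read completely counts `+1`; when the input ends inside a
block, the input is extended by the forced block at that point, at a cost of `-1`; when the input
and the pending block disagree, the two are evaluated separately and the values added. With these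
conventions appending a forced block to any input raises the value by exactly one, whatever the
state of the reader. The reader is a finitely branching recursion of decreasing rank, so it can
be evaluated by a worklist run for exponentially many steps, which makes the colouring computable.
-/

theorem Computable.ite {α σ : Type*} [Primcodable α] [Primcodable σ] {c : α → Prop}
    [DecidablePred c] {f g : α → σ} (hc : ComputablePred c) (hf : Computable f)
    (hg : Computable g) : Computable fun a => if c a then f a else g a := by
  simpa [Bool.cond_decide] using hc.decide.cond hf hg

theorem primrec₂_pow : Primrec₂ ((· ^ ·) : ℕ → ℕ → ℕ) :=
  Primrec₂.unpaired'.1 Nat.Primrec.pow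

structure WeightedTree (σ : Type*) where
  weight : σ → ℕ
  children : σ → List σ
  rank : σ → ℕ
  rank_lt_of_mem_children : ∀ x, ∀ y ∈ children x, rank y < rank x

namespace WeightedTree

variable {σ : Type*} (T : WeightedTree σ)

def total (x : σ) : ℕ := T.weight x + ((T.children x).map total).sum
termination_by T.rank x
decreasing_by exact T.rank_lt_of_mem_children x _ ‹_›

def size (x : σ) : ℕ := 1 + ((T.children x).map size).sum
termination_by T.rank x
decreasing_by exact T.rank_lt_of_mem_children x _ ‹_›

theorem total_eq (x : σ) : T.total x = T.weight x + ((T.children x).map T.total).sum := by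
  rw [total]

theorem size_eq (x : σ) : T.size x = 1 + ((T.children x).map T.size).sum := by
  rw [size]

theorem size_le_pow {b : ℕ} (hb : ∀ x, (T.children x).length ≤ b) {n : ℕ} {x : σ}
    (hx : T.rank x < n) : T.size x ≤ (b + 1) ^ n := by
  induction n generalizing x with
  | zero => omega
  | succ n ih =>
    have hchild : ∀ m ∈ (T.children x).map T.size, m ≤ (b + 1) ^ n := by
      simp only [List.mem_map]
      rintro _ ⟨y, hy, rfl⟩
      exact ih (by have := T.rank_lt_of_mem_children x y hy; omega)
    have hsum : ((T.children x).map T.size).sum ≤ b * (b + 1) ^ n := by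
      simpa using (List.sum_le_card_nsmul _ _ hchild).trans
        (Nat.mul_le_mul_right _ (by simpa using hb x))
    rw [size_eq, pow_succ]
    nlinarith [Nat.one_le_pow n (b + 1) (by omega)]

def step : List σ × ℕ → List σ × ℕ
  | ([], a) => ([], a)
  | (x :: l, a) => (T.children x ++ l, a + T.weight x)

theorem step_iterate {n : ℕ} {l : List σ} (hn : (l.map T.size).sum ≤ n) (a : ℕ) :
    T.step^[n] (l, a) = ([], a + (l.map T.total).sum) := by
  induction n generalizing l a with
  | zero =>
    cases l with
    | nil => rfl
    | cons x l => simp [size_eq] at hn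
  | succ n ih =>
    cases l with
    | nil => exact ih (l := []) (by simp) a
    | cons x l =>
      rw [Function.iterate_succ_apply, step, ih]
      · simp only [List.map_append, List.sum_append, List.map_cons, T.total_eq x, List.sum_cons,
          Prod.mk.injEq, true_and]
        ring
      · simp only [List.map_cons, T.size_eq x, List.sum_cons, List.map_append,
          List.sum_append] at hn ⊢
        omega

theorem total_eq_step_iterate {b : ℕ} (hb : ∀ x, (T.children x).length ≤ b) (x : σ) :
    T.total x = (T.step^[(b + 1) ^ (T.rank x + 1)] ([x], 0)).2 := by
  rw [T.step_iterate (by simpa using T.size_le_pow hb (Nat.lt_succ_self _))]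
  simp

open Computable in
theorem computable₂_total {α : Type*} [Primcodable α] [Primcodable σ]
    (T : α → WeightedTree σ) {b : ℕ} (hb : ∀ a x, ((T a).children x).length ≤ b)
    (hweight : Computable₂ fun a x => (T a).weight x)
    (hchildren : Computable₂ fun a x => (T a).children x)
    (hrank : Computable₂ fun a x => (T a).rank x) :
    Computable₂ fun a x => (T a).total x := by
  have hstep : Computable₂ fun a st => (T a).step st := by
    refine (option_casesOn (Primrec.list_head?.to_comp.comp (fst.comp snd)) snd
      (pair (list_append.comp (hchildren.comp (fst.comp fst) snd)
          (Primrec.list_tail.to_comp.comp (fst.comp (snd.comp fst))))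
        (Primrec.nat_add.to_comp.comp (snd.comp (snd.comp fst))
          (hweight.comp (fst.comp fst) snd))).to₂).of_eq ?_
    rintro ⟨a, _ | ⟨x, l⟩, n⟩ <;> rfl
  have hfuel : Computable fun p : α × σ => (b + 1) ^ ((T p.1).rank p.2 + 1) :=
    primrec₂_pow.to_comp.comp (const _) (succ.comp hrank)
  have hrun := nat_rec hfuel (pair (list_cons.comp snd (const [])) (const 0))
    (hstep.comp (fst.comp fst) (snd.comp snd)).to₂
  refine (snd.comp hrun).of_eq fun p => ?_
  have hiter : ∀ (n : ℕ) st, Nat.rec (motive := fun _ => List σ × ℕ) st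
      (fun _ IH => (T p.1).step IH) n = (T p.1).step^[n] st := by
    intro n st
    induction n with
    | zero => rfl
    | succ n ih => rw [Function.iterate_succ_apply', ← ih]
  simp only [hiter, (T p.1).total_eq_step_iterate (hb p.1) p.2]

end WeightedTree

theorem primrec_mu : Primrec mu := by
  refine (Primrec.nat_findGreatest (p := fun x k => 2 ^ k ≤ x) Primrec.id
    (Primrec.nat_le.comp (primrec₂_pow.comp (Primrec.const 2) Primrec.snd) Primrec.fst)).of_eq
    fun x => ?_
  rcases eq_or_ne x 0 with rfl | hx
  · simp [mu]
  refine le_antisymm ?_ (Nat.le_findGreatest (Nat.log_le_self 2 x) (Nat.pow_log_le_self 2 hx))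
  exact Nat.le_log_of_pow_le one_lt_two (Nat.findGreatest_spec (P := fun k => 2 ^ k ≤ x)
    (Nat.zero_le x) (Nat.one_le_iff_ne_zero.2 hx))

theorem lt_two_pow_of_mem_Bset {x n : ℕ} (hx : x ∈ Bset n) : x < 2 ^ (n + 1) := by
  obtain ⟨-, rfl⟩ := hx
  exact Nat.lt_pow_succ_log_self one_lt_two x

theorem pow_mu_add_mod {x : ℕ} (hx : x ≠ 0) : 2 ^ mu x + x % 2 ^ mu x = x := by
  have h1 : 2 ^ mu x ≤ x := Nat.pow_log_le_self 2 hx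
  have h2 : x < 2 ^ (mu x + 1) := Nat.lt_pow_succ_log_self one_lt_two x
  have : x / 2 ^ mu x = 1 :=
    Nat.div_eq_of_lt_le (by simpa using h1) (by rw [pow_succ] at h2; omega)
  simpa [this] using Nat.div_add_mod x (2 ^ mu x)

theorem mod_pow_mu_add_lt {y x k : ℕ} (hy : y ≠ 0) (hk : 2 ^ k ∣ y) (hx : x < 2 ^ k) :
    y % 2 ^ mu y + x < 2 ^ mu y := by
  have hkj : k ≤ mu y :=
    Nat.le_log_of_pow_le one_lt_two (Nat.le_of_dvd (Nat.pos_of_ne_zero hy) hk)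
  have hdvd : 2 ^ k ∣ 2 ^ mu y := pow_dvd_pow 2 hkj
  obtain ⟨a, ha⟩ := (Nat.dvd_mod_iff hdvd).2 hk
  obtain ⟨c, hc⟩ := hdvd
  have hlt : y % 2 ^ mu y < 2 ^ mu y := Nat.mod_lt _ (by positivity)
  rw [ha, hc] at hlt ⊢
  have : a + 1 ≤ c := Nat.lt_of_mul_lt_mul_left hlt
  nlinarith

theorem mu_add_of_dvd {y x k : ℕ} (hy : y ≠ 0) (hk : 2 ^ k ∣ y) (hx : x < 2 ^ k) :
    mu (y + x) = mu y := by
  have := pow_mu_add_mod hy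
  have := mod_pow_mu_add_lt hy hk hx
  exact Nat.log_eq_of_pow_le_of_lt_pow (by omega) (by rw [pow_succ]; omega)

theorem add_mod_pow_mu_of_dvd {y x k : ℕ} (hy : y ≠ 0) (hk : 2 ^ k ∣ y) (hx : x < 2 ^ k) :
    (y + x) % 2 ^ mu y = y % 2 ^ mu y + x := by
  have hsplit : y + x = 2 ^ mu y + (y % 2 ^ mu y + x) := by
    have := pow_mu_add_mod hy
    omega
  rw [hsplit, Nat.add_mod_left]
  exact Nat.mod_eq_of_lt (mod_pow_mu_add_lt hy hk hx)

theorem lam_mod_pow_mu {y : ℕ} (h : y % 2 ^ mu y ≠ 0) : lam (y % 2 ^ mu y) = lam y := by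
  have hy : y ≠ 0 := by
    rintro rfl
    simp at h
  have hdvd : ∀ k, 2 ^ k ∣ y % 2 ^ mu y ↔ 2 ^ k ∣ y := by
    intro k
    rcases le_or_gt k (mu y) with hk | hk
    · exact Nat.dvd_mod_iff (pow_dvd_pow 2 hk)
    have hlt : 2 ^ (mu y + 1) ≤ 2 ^ k := Nat.pow_le_pow_right two_pos hk
    refine iff_of_false (fun hd => h (Nat.eq_zero_of_dvd_of_lt hd ?_))
      (fun hd => hy (Nat.eq_zero_of_dvd_of_lt hd ?_))
    · exact (Nat.mod_lt _ (Nat.two_pow_pos _)).trans (Nat.pow_lt_pow_right one_lt_two hk)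
    · exact (Nat.lt_pow_succ_log_self one_lt_two y).trans_le hlt
  unfold lam
  apply le_antisymm
  · rw [← padicValNat_dvd_iff_le hy, ← hdvd]
    exact pow_padicValNat_dvd
  · rw [← padicValNat_dvd_iff_le h, hdvd]
    exact pow_padicValNat_dvd

/-- The reader in state `(v, p, rest)`: `v` is the unread part of the pending block (`0` if there
is none), `p` the last digit read and `rest` the unread input. The block opened after the digit `p`
with leading digit `j` is `q j p`. The weight `r - 1` stands for `-1` in `ZMod r`. -/
def scanNode (r : ℕ) (q : ℕ → ℕ → ℕ) (v p rest : ℕ) :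
    ℕ × List (ℕ × ℕ × ℕ) :=
  if v = 0 ∧ rest = 0 then (0, [])
  else if v ≠ 0 ∧ rest ≠ 0 ∧ mu v ≠ mu rest then (0, [(v, p, 0), (0, p, rest)])
  else
    let j := if v = 0 then mu rest else mu v
    let u := if v = 0 then q j p else v
    let x := if rest = 0 then q j p else rest
    ((if u % 2 ^ j = 0 then 1 else 0) + (if rest = 0 then r - 1 else 0),
      [(u % 2 ^ j, j, x % 2 ^ j)])

def scanTree (r : ℕ) (q : ℕ → ℕ → ℕ) : WeightedTree (ℕ × ℕ × ℕ) where
  weight s := (scanNode r q s.1 s.2.1 s.2.2).1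
  children s := (scanNode r q s.1 s.2.1 s.2.2).2
  rank s := s.1 + s.2.2
  rank_lt_of_mem_children := by
    rintro ⟨v, p, rest⟩ ⟨v', p', rest'⟩ h
    have hv := pow_mu_add_mod (x := v)
    have hr := pow_mu_add_mod (x := rest)
    have h1 := Nat.mod_lt (q (mu rest) p) (Nat.two_pow_pos (mu rest))
    have h2 := Nat.mod_lt (q (mu v) p) (Nat.two_pow_pos (mu v))
    simp only [scanNode] at h
    split_ifs at h <;>
      simp only [List.mem_cons, Prod.mk.injEq, List.not_mem_nil, or_false] at h <;> grind

theorem scanTree_children_length_le (r : ℕ) (q : ℕ → ℕ → ℕ) (s : ℕ × ℕ × ℕ) :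
    ((scanTree r q).children s).length ≤ 2 := by
  simp only [scanTree, scanNode]
  split_ifs <;> simp

def scan (r : ℕ) (q : ℕ → ℕ → ℕ) (v p rest : ℕ) : ZMod r :=
  (scanTree r q).total (v, p, rest)

def scanRead (r : ℕ) (q : ℕ → ℕ → ℕ) (j u x : ℕ) : ZMod r :=
  (if u % 2 ^ j = 0 then 1 else 0) + scan r q (u % 2 ^ j) j (x % 2 ^ j)

section Scan

variable (r : ℕ) (q : ℕ → ℕ → ℕ) {v p rest : ℕ}

theorem scan_zero_zero (p : ℕ) : scan r q 0 p 0 = 0 := by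
  simp [scan, WeightedTree.total_eq, scanTree, scanNode]

theorem scan_zero_left (hrest : rest ≠ 0) :
    scan r q 0 p rest = scanRead r q (mu rest) (q (mu rest) p) rest := by
  rw [scan, WeightedTree.total_eq]
  simp [scanTree, scanNode, hrest, scanRead, scan]

theorem scan_zero_right [NeZero r] (hv : v ≠ 0) :
    scan r q v p 0 = scanRead r q (mu v) v (q (mu v) p) - 1 := by
  rw [scan, WeightedTree.total_eq]
  simp [scanTree, scanNode, hv, scanRead, scan, Nat.cast_sub (NeZero.one_le (n := r))]
  ring

theorem scan_of_mu_eq (hv : v ≠ 0) (hrest : rest ≠ 0) (h : mu v = mu rest) :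
    scan r q v p rest = scanRead r q (mu v) v rest := by
  rw [scan, WeightedTree.total_eq]
  simp [scanTree, scanNode, hv, hrest, h, scanRead, scan]

theorem scan_of_mu_ne (hv : v ≠ 0) (hrest : rest ≠ 0) (h : mu v ≠ mu rest) :
    scan r q v p rest = scan r q v p 0 + scan r q 0 p rest := by
  rw [scan, WeightedTree.total_eq]
  simp [scanTree, scanNode, hv, hrest, h, scan]

theorem scan_self (hv : v ≠ 0) (p : ℕ) : scan r q v p v = 1 := by
  induction v using Nat.strong_induction_on generalizing p with
  | _ v ih =>
    rw [scan_of_mu_eq r q hv hv rfl, scanRead]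
    by_cases h : v % 2 ^ mu v = 0
    · simp [h, scan_zero_zero]
    · rw [if_neg h, zero_add]
      exact ih _ ((Nat.mod_lt _ (Nat.two_pow_pos _)).trans_le (Nat.pow_log_le_self 2 hv)) h _

variable [NeZero r]

theorem scan_block {u : ℕ} (hu0 : u ≠ 0) (hu : q (mu u) p = u) (v : ℕ) :
    scan r q v p u = scan r q v p 0 + 1 := by
  have hzero : scan r q 0 p u = 1 := by
    rw [scan_zero_left r q hu0, hu, ← scan_of_mu_eq r q hu0 hu0 rfl (p := p), scan_self r q hu0]
  rcases eq_or_ne v 0 with rfl | hv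
  · rw [hzero, scan_zero_zero, zero_add]
  by_cases h : mu v = mu u
  · rw [scan_of_mu_eq r q hv hu0 h, scan_zero_right r q hv, h, hu]
    ring
  · rw [scan_of_mu_ne r q hv hu0 h, hzero]

theorem scan_add_block {x : ℕ} (hrest : rest ≠ 0) (hx0 : x ≠ 0) (hxk : x < 2 ^ lam rest)
    (hx : q (mu x) (lam rest) = x) (v p : ℕ) :
    scan r q v p (rest + x) = scan r q v p rest + 1 := by
  induction rest using Nat.strong_induction_on generalizing v p with
  | _ rest ih =>
  set j := mu rest
  have hdvd : 2 ^ lam rest ∣ rest := pow_padicValNat_dvd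
  have hsplit : 2 ^ j + rest % 2 ^ j = rest := pow_mu_add_mod hrest
  have hmu : mu (rest + x) = j := mu_add_of_dvd hrest hdvd hxk
  have hsum0 : rest + x ≠ 0 := by omega
  have hlow : ∀ u, scan r q u j (rest % 2 ^ j + x) = scan r q u j (rest % 2 ^ j) + 1 := by
    intro u
    rcases eq_or_ne (rest % 2 ^ j) 0 with ht | ht
    · have hlam : lam rest = j := by
        rw [← hsplit, ht, add_zero]
        exact padicValNat.prime_pow j
      rw [ht, zero_add]
      exact scan_block r q hx0 (hlam ▸ hx) u
    · have hlam := lam_mod_pow_mu ht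
      exact ih _ (by omega) ht (hlam ▸ hxk) (hlam ▸ hx) u j
  have hread : ∀ u, scanRead r q j u (rest + x) = scanRead r q j u rest + 1 := by
    intro u
    rw [scanRead, scanRead, add_mod_pow_mu_of_dvd hrest hdvd hxk, hlow, add_assoc]
  have hzero : scan r q 0 p (rest + x) = scan r q 0 p rest + 1 := by
    rw [scan_zero_left r q hsum0, scan_zero_left r q hrest, hmu, hread]
  rcases eq_or_ne v 0 with rfl | hv
  · exact hzero
  by_cases h : mu v = j
  · rw [scan_of_mu_eq r q hv hsum0 (h.trans hmu.symm), scan_of_mu_eq r q hv hrest h, h, hread]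
  · rw [scan_of_mu_ne r q hv hsum0 (hmu ▸ h), scan_of_mu_ne r q hv hrest h, hzero, add_assoc]

end Scan

open Computable in
theorem computable_scanNode (r : ℕ) {Q : ℕ → ℕ → ℕ → ℕ}
    (hQ : Computable fun p : ℕ × ℕ × ℕ => Q p.1 p.2.1 p.2.2) :
    Computable fun a : ℕ × ℕ × ℕ × ℕ =>
      scanNode r (fun n p => Q n p a.1) a.2.1 a.2.2.1 a.2.2.2 := by
  have hs : Primrec fun a : ℕ × ℕ × ℕ × ℕ => a.1 := Primrec.fst
  have hv : Primrec fun a : ℕ × ℕ × ℕ × ℕ => a.2.1 := Primrec.fst.comp Primrec.snd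
  have hp : Primrec fun a : ℕ × ℕ × ℕ × ℕ => a.2.2.1 :=
    Primrec.fst.comp (Primrec.snd.comp Primrec.snd)
  have hr : Primrec fun a : ℕ × ℕ × ℕ × ℕ => a.2.2.2 :=
    Primrec.snd.comp (Primrec.snd.comp Primrec.snd)
  have hv0 : PrimrecPred fun a : ℕ × ℕ × ℕ × ℕ => a.2.1 = 0 :=
    Primrec.eq.comp hv (Primrec.const 0)
  have hr0 : PrimrecPred fun a : ℕ × ℕ × ℕ × ℕ => a.2.2.2 = 0 :=
    Primrec.eq.comp hr (Primrec.const 0)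
  have hmu : PrimrecPred fun a : ℕ × ℕ × ℕ × ℕ => mu a.2.1 ≠ mu a.2.2.2 :=
    (Primrec.eq.comp (primrec_mu.comp hv) (primrec_mu.comp hr)).not
  have hj : Primrec fun a : ℕ × ℕ × ℕ × ℕ =>
      if a.2.1 = 0 then mu a.2.2.2 else mu a.2.1 :=
    Primrec.ite hv0 (primrec_mu.comp hr) (primrec_mu.comp hv)
  have hpj := primrec₂_pow.comp (Primrec.const 2) hj
  have hq : Computable fun a : ℕ × ℕ × ℕ × ℕ =>
      Q (if a.2.1 = 0 then mu a.2.2.2 else mu a.2.1) a.2.2.1 a.1 :=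
    (hQ.comp (hj.to_comp.pair (hp.to_comp.pair hs.to_comp))).of_eq fun _ => rfl
  have hu : Computable fun a : ℕ × ℕ × ℕ × ℕ =>
      if a.2.1 = 0 then Q (if a.2.1 = 0 then mu a.2.2.2 else mu a.2.1) a.2.2.1 a.1 else a.2.1 :=
    Computable.ite hv0.computablePred hq hv.to_comp
  have hx : Computable fun a : ℕ × ℕ × ℕ × ℕ =>
      if a.2.2.2 = 0 then Q (if a.2.1 = 0 then mu a.2.2.2 else mu a.2.1) a.2.2.1 a.1
      else a.2.2.2 :=
    Computable.ite hr0.computablePred hq hr.to_comp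
  have hum := Primrec.nat_mod.to_comp.comp hu hpj.to_comp
  have hxm := Primrec.nat_mod.to_comp.comp hx hpj.to_comp
  have hsplit : Computable fun a : ℕ × ℕ × ℕ × ℕ =>
      ((0 : ℕ), [(a.2.1, a.2.2.1, (0 : ℕ)), ((0 : ℕ), a.2.2.1, a.2.2.2)]) :=
    pair (const 0) (list_cons.comp (pair hv.to_comp (pair hp.to_comp (const 0)))
      (list_cons.comp (pair (const 0) (pair hp.to_comp hr.to_comp)) (const [])))
  have hweight := Primrec.nat_add.to_comp.comp
    (Computable.ite (Computable.computablePred (Primrec.eq.decide.to_comp.comp hum (const 0)))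
      (const 1) (const 0))
    (Computable.ite hr0.computablePred (const (r - 1)) (const 0))
  have hread := pair hweight (list_cons.comp (pair hum (pair hj.to_comp hxm)) (const []))
  exact (Computable.ite (hv0.and hr0).computablePred (const _) (Computable.ite
    (hv0.not.and (hr0.not.and hmu)).computablePred hsplit hread)).of_eq fun _ => rfl

theorem computable_scan (r : ℕ) {Q : ℕ → ℕ → ℕ → ℕ}
    (hQ : Computable fun p : ℕ × ℕ × ℕ => Q p.1 p.2.1 p.2.2) :
    Computable fun w => (scan r (fun n p => Q n p (mu w)) 0 0 w).val := by
  have hnode := computable_scanNode r hQ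
  have htotal := WeightedTree.computable₂_total (fun s => scanTree r fun n p => Q n p s)
    (fun _ => scanTree_children_length_le r _) (Computable.fst.comp hnode)
    (Computable.snd.comp hnode) (Primrec.nat_add.comp (Primrec.fst.comp Primrec.snd)
      (Primrec.snd.comp (Primrec.snd.comp Primrec.snd))).to_comp
  refine (Primrec.nat_mod.to_comp.comp (htotal.comp primrec_mu.to_comp
    (Computable.pair (Computable.const 0) (Computable.pair (Computable.const 0) Computable.id)))
    (Computable.const r)).of_eq fun w => ?_
  simp [scan, ZMod.val_natCast]

theorem stmt8 (Q : ℕ → ℕ → ℕ → ℕ)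
    (hQ : Computable (fun p : ℕ × ℕ × ℕ => Q p.1 p.2.1 p.2.2))
    (hQB : ∀ n k s, Q n k s ∈ Bset n) (r : ℕ) (hr : 1 < r) :
    ∃ c : ℕ → ZMod r, Computable (fun w => (c w).val) ∧
      ∀ w : ℕ, 0 < w → ∀ n < lam w, c (w + Q n (lam w) (mu w)) = c w + 1 := by
  have : NeZero r := ⟨by omega⟩
  refine ⟨fun w => scan r (fun n p => Q n p (mu w)) 0 0 w, computable_scan r hQ, ?_⟩
  intro w hw n hn
  have hxk : Q n (lam w) (mu w) < 2 ^ lam w :=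
    (lt_two_pow_of_mem_Bset (hQB n _ _)).trans_le (Nat.pow_le_pow_right two_pos hn)
  obtain ⟨hx0, hxn⟩ := hQB n (lam w) (mu w)
  simp only [mu_add_of_dvd hw.ne' pow_padicValNat_dvd hxk]
  exact scan_add_block r _ hw.ne' hx0.ne' hxk (by rw [hxn]) 0 0
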